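/- Every segment s_j contains every vertex of V ∖ {v_mid} whose relative deadline is at most T + l + 2h. -/

import Mathlib

namespace CRUAV

/-! ### Generic single-UAV CR-UAV notions -/

/-- Duration of the subpath of an infinite path `s` between positions `a` and `b`. -/
def dur {V : Type*} (FT : V → V → ℕ) (s : ℕ → V) (a b : ℕ) : ℕ :=
  ∑ i ∈ Finset.Ico a b, FT (s i) (s (i + 1))

/-- `s` is a solution: an infinite path (consecutive vertices distinct) visiting every
vertex infinitely often, in which any subpath joining consecutive occurrences of a
vertex `v` has duration at most `RD v`. -/
def IsSolution {V : Type*} (RD : V → ℕ) (FT : V → V → ℕ) (s : ℕ → V) : Prop :=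
  (∀ n, s n ≠ s (n + 1)) ∧
  (∀ v : V, ∀ N : ℕ, ∃ n, N ≤ n ∧ s n = v) ∧
  (∀ v : V, ∀ a b : ℕ, a < b → s a = v → s b = v →
      (∀ i, a < i → i < b → s i ≠ v) → dur FT s a b ≤ RD v)

/-- The infinite periodic path obtained by repeating the finite word `u` forever. -/
def omegaPath {V : Type*} (u : List V) (d : V) : ℕ → V :=
  fun n => u.getD (n % u.length) d

/-- Duration of a finite path given as a list of vertices. -/
def durL {V : Type*} (FT : V → V → ℕ) (L : List V) : ℕ :=
  (L.zipWith FT L.tail).sum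

/-- The (inclusive) slice of a list between positions `a` and `b`. -/
def slice {V : Type*} (L : List V) (a b : ℕ) : List V := (L.take (b + 1)).drop a

/-- Duration of the subpath of the finite path `L` between positions `a` and `b`. -/
def fragDur {V : Type*} (FT : V → V → ℕ) (d : V) (L : List V) (a b : ℕ) : ℕ :=
  ∑ i ∈ Finset.Ico a b, FT (L.getD i d) (L.getD (i + 1) d)

/-! ### The constructed instance `G` -/

/-- The constant `l = 24h + 34`. -/
def l (h : ℕ) : ℕ := 24 * h + 34

/-- The constant `T`. -/
def T (m h : ℕ) : ℕ :=
  2 * (m * (2 * (3 * m + 1) * l h + l h) + m * (2 * (3 * m + 2) * l h + l h) + l h + 2 * h)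

/-- The vertices of the constructed instance `G`.  Gadgets are indexed by
`g : Fin (2*m)`: gadget `g` with `g < m` belongs to the variable `x_{g+1}^0`, and
gadget `g` with `m ≤ g` to the variable `x_{g-m+1}^1`.  `shared k` is the vertex
`v_{k+1}` shared by consecutive gadgets.  In `side g right pos`, `right = false`
selects the left side `LS` and `right = true` the right side `RS`; `pos` is
`0` (top), `1` (middle), `2` (bottom).  `row g c pos` is the vertex of the row of
gadget `g` in column `c` (of the `4h+2` columns of the `h` clause boxes alternating
with the `h+1` separator boxes) at height `pos`.  `clauseV k` is the clause vertex of
clause `c_{k+1}`; `pvt i right` is the pivot vertex of `LCG_{i+1}`/`RCG_{i+1}` and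
`port i right d` its four surrounding vertices (`d`: `0` = in↓, `1` = out↑,
`2` = in↑, `3` = out↓). -/
inductive Vtx (m h : ℕ) : Type where
  | top : Vtx m h
  | bot : Vtx m h
  | mid : Vtx m h
  | shared (k : Fin (2 * m - 1)) : Vtx m h
  | side (g : Fin (2 * m)) (right : Bool) (pos : Fin 3) : Vtx m h
  | row (g : Fin (2 * m)) (c : Fin (4 * h + 2)) (pos : Fin 3) : Vtx m h
  | clauseV (k : Fin h) : Vtx m h
  | pvt (i : Fin m) (right : Bool) : Vtx m h
  | port (i : Fin m) (right : Bool) (d : Fin 4) : Vtx m h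
  deriving DecidableEq

/-- The vertex at the top of gadget `g`. -/
def topVtx {m h : ℕ} (g : Fin (2 * m)) : Vtx m h :=
  if hg : (g : ℕ) = 0 then .top else .shared ⟨(g : ℕ) - 1, by have := g.isLt; omega⟩

/-- The vertex at the bottom of gadget `g`. -/
def botVtx {m h : ℕ} (g : Fin (2 * m)) : Vtx m h :=
  if hg : (g : ℕ) = 2 * m - 1 then .bot else .shared ⟨(g : ℕ), by have := g.isLt; omega⟩

/-- Flight time of the two long edges at the top of gadget `g`. -/
def longTop (m h : ℕ) (g : Fin (2 * m)) : ℕ :=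
  if (g : ℕ) < m then (3 * m + 1) * l h else (3 * m + 2) * l h

/-- Flight time of the two long edges at the bottom of gadget `g`
(the bottom long edges of the gadget of `x_m^0` already have flight time `(3m+2)l`). -/
def longBot (m h : ℕ) (g : Fin (2 * m)) : ℕ :=
  if (g : ℕ) + 1 < m then (3 * m + 1) * l h else (3 * m + 2) * l h

/-- The edges of `G`, listed in one direction, with their flight times.
`occurs k g = some true` (resp. `some false`) means that the variable of gadget `g`
occurs positively (resp. negatively) in the clause `c_{k+1}`. -/
def adjFT (m h : ℕ) (occurs : Fin h → Fin (2 * m) → Option Bool) :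
    Vtx m h → Vtx m h → Option ℕ
  -- long edges from the top of the first gadget
  | .top, .side g _ p => if (g : ℕ) = 0 ∧ (p : ℕ) = 0 then some (longTop m h g) else none
  -- long edges into the bottom of the last gadget
  | .bot, .side g _ p => if (g : ℕ) = 2 * m - 1 ∧ (p : ℕ) = 2 then some (longBot m h g) else none
  -- long edges at shared vertices
  | .shared k, .side g _ p =>
      if (k : ℕ) + 1 = (g : ℕ) ∧ (p : ℕ) = 0 then some (longTop m h g)
      else if (k : ℕ) = (g : ℕ) ∧ (p : ℕ) = 2 then some (longBot m h g)
      else none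
  -- vertical edges inside `LS` and `RS`
  | .side g r p, .side g' r' p' =>
      if g = g' ∧ r = r' ∧ (p : ℕ) + 1 = (p' : ℕ) then some 2 else none
  -- vertical edges inside a column of a row, and horizontal edges along the top
  -- and the bottom of a row
  | .row g c p, .row g' c' p' =>
      if g = g' ∧ c = c' ∧ (p : ℕ) + 1 = (p' : ℕ) then some 2
      else if g = g' ∧ (c : ℕ) + 1 = (c' : ℕ) ∧ p = p' ∧ ((p : ℕ) = 0 ∨ (p : ℕ) = 2) then
        some 2
      else none
  -- the edges at `v_mid`
  | .mid, .top => some (T m h / 4)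
  | .mid, .bot => some (T m h / 4)
  -- edges joining a clause vertex to the two bottom (positive occurrence) or the two
  -- top (negative occurrence) corners of the corresponding clause box
  | .clauseV k, .row g c p =>
      if ((c : ℕ) = 4 * (k : ℕ) + 2 ∨ (c : ℕ) = 4 * (k : ℕ) + 3) ∧
          ((occurs k g = some true ∧ (p : ℕ) = 2) ∨ (occurs k g = some false ∧ (p : ℕ) = 0))
      then some 2 else none
  -- edges inside the consistency gadgets
  | .pvt i r, .port i' r' _ => if i = i' ∧ r = r' then some 2 else none
  -- edges joining the ports of the consistency gadgets to the sides `LS`/`RS`: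
  -- in↓ and out↑ serve the gadget of `x_{i+1}^0`, in↑ and out↓ that of `x_{i+1}^1`;
  -- "in" ports attach to the bottom of the side, "out" ports to its top
  | .port i r dd, .side g s p =>
      if s = r ∧
          ((((dd : ℕ) = 0 ∨ (dd : ℕ) = 1) ∧ (g : ℕ) = (i : ℕ)) ∨
            (((dd : ℕ) = 2 ∨ (dd : ℕ) = 3) ∧ (g : ℕ) = (i : ℕ) + m)) ∧
          ((((dd : ℕ) = 0 ∨ (dd : ℕ) = 2) ∧ (p : ℕ) = 2) ∨
            (((dd : ℕ) = 1 ∨ (dd : ℕ) = 3) ∧ (p : ℕ) = 0))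
      then some 2 else none
  -- edges joining the ports of the consistency gadgets to the end columns of the rows
  -- (as in Figure 4 of the paper: on the left, in↓/in↑ attach to the bottom-left and
  -- out↑/out↓ to the top-left row corner; on the right, in↓/in↑ attach to the
  -- top-right and out↑/out↓ to the bottom-right row corner)
  | .port i r dd, .row g c p =>
      if ((r = false ∧ (c : ℕ) = 0) ∨ (r = true ∧ (c : ℕ) = 4 * h + 1)) ∧
          ((((dd : ℕ) = 0 ∨ (dd : ℕ) = 1) ∧ (g : ℕ) = (i : ℕ)) ∨
            (((dd : ℕ) = 2 ∨ (dd : ℕ) = 3) ∧ (g : ℕ) = (i : ℕ) + m)) ∧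
          ((r = false ∧ ((((dd : ℕ) = 0 ∨ (dd : ℕ) = 2) ∧ (p : ℕ) = 2) ∨
              (((dd : ℕ) = 1 ∨ (dd : ℕ) = 3) ∧ (p : ℕ) = 0))) ∨
            (r = true ∧ ((((dd : ℕ) = 0 ∨ (dd : ℕ) = 2) ∧ (p : ℕ) = 0) ∨
              (((dd : ℕ) = 1 ∨ (dd : ℕ) = 3) ∧ (p : ℕ) = 2))))
      then some 2 else none
  | _, _ => none

/-- The flight times of `G`: the listed edges, symmetrised; all remaining pairs of
distinct vertices are joined by an edge of flight time `2T`. -/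
def FT (m h : ℕ) (occurs : Fin h → Fin (2 * m) → Option Bool) (v w : Vtx m h) : ℕ :=
  if v = w then 0
  else
    match adjFT m h occurs v w with
    | some x => x
    | none =>
      match adjFT m h occurs w v with
      | some x => x
      | none => 2 * T m h

/-- The relative deadlines of `G`. -/
def RD (m h : ℕ) : Vtx m h → ℕ
  | .top => T m h
  | .bot => T m h
  | .mid => T m h
  | .shared _ => T m h + 2 * h
  | .side _ _ _ => T m h + l h + 2 * h
  | .row _ _ _ => T m h + l h + 2 * h
  | .clauseV _ => 3 * T m h / 2
  | .pvt i _ => T m h / 2 + m * (2 * (3 * m + 2) * l h + l h) + 4 * h - (2 * (i : ℕ) + 1) * l h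
  | .port _ _ _ => 3 * T m h / 2

/-! ### Periodic solutions split into segments -/

/-- The word `v_mid s₁ v_mid s₂ ⋯ v_mid s_p`. -/
def word {m h p : ℕ} (segs : Fin p → List (Vtx m h)) : List (Vtx m h) :=
  (List.ofFn (fun j => Vtx.mid :: segs j)).flatten

/-- The infinite periodic path `(v_mid s₁ v_mid s₂ ⋯ v_mid s_p)^ω`. -/
def pathOf {m h p : ℕ} (segs : Fin p → List (Vtx m h)) : ℕ → Vtx m h :=
  omegaPath (word segs) .mid

/-- The special vertices `S ∪ {v_top, v_bot}`. -/
def isSpecial {m h : ℕ} : Vtx m h → Bool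
  | .top => true
  | .bot => true
  | .shared _ => true
  | _ => false

/-- A fragment of the segment `L`: a maximal subpath, from position `a` to position
`b`, whose endpoints are distinct special vertices and which contains no other
special vertex. -/
def Fragment {m h : ℕ} (L : List (Vtx m h)) (a b : ℕ) : Prop :=
  a < b ∧ b < L.length ∧
    isSpecial (L.getD a Vtx.mid) = true ∧ isSpecial (L.getD b Vtx.mid) = true ∧
    L.getD a Vtx.mid ≠ L.getD b Vtx.mid ∧
    ∀ i, a < i → i < b → isSpecial (L.getD i Vtx.mid) = false

/-! ### Clause boxes, traversal patterns, traversal directions -/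

/-- The column of the first (`sec = false`) or second (`sec = true`) column of the
`(k+1)`-st clause box. -/
def boxCol {h : ℕ} (k : Fin h) (sec : Bool) : Fin (4 * h + 2) :=
  ⟨4 * (k : ℕ) + 2 + (if sec then 1 else 0), by have := k.isLt; split <;> omega⟩

/-- The vertices of the `(k+1)`-st clause box of gadget `g`. -/
def boxV {m h : ℕ} (g : Fin (2 * m)) (k : Fin h) (sec : Bool) (p : Fin 3) : Vtx m h :=
  .row g (boxCol k sec) p

/-- Membership in the `(k+1)`-st clause box of gadget `g`. -/
def InClauseBox {m h : ℕ} (g : Fin (2 * m)) (k : Fin h) (v : Vtx m h) : Prop :=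
  ∃ sec p, v = boxV g k sec p

/-- The order of the six vertices of a clause box in pattern `⊓`, entered at the
bottom corner of column `flip`. -/
def sqcapSeq {m h : ℕ} (g : Fin (2 * m)) (k : Fin h) (flip : Bool) : List (Vtx m h) :=
  [boxV g k flip 2, boxV g k flip 1, boxV g k flip 0,
   boxV g k (!flip) 0, boxV g k (!flip) 1, boxV g k (!flip) 2]

/-- The order of the six vertices of a clause box in pattern `⊔`, entered at the
top corner of column `flip`. -/
def sqcupSeq {m h : ℕ} (g : Fin (2 * m)) (k : Fin h) (flip : Bool) : List (Vtx m h) :=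
  [boxV g k flip 0, boxV g k flip 1, boxV g k flip 2,
   boxV g k (!flip) 2, boxV g k (!flip) 1, boxV g k (!flip) 0]

/-- `L` traverses the vertices of `seq` in order, consecutively except for possible
detours from a vertex of `seq` to a clause vertex and immediately back. -/
def TraversedIn {m h : ℕ} (L : List (Vtx m h)) (seq : List (Vtx m h)) : Prop :=
  ∃ f : Fin seq.length → ℕ,
    (∀ t, f t < L.length) ∧
    (∀ t, L.getD (f t) Vtx.mid = seq.get t) ∧
    (∀ (t : ℕ) (ht : t + 1 < seq.length),
      f ⟨t + 1, ht⟩ = f ⟨t, by omega⟩ + 1 ∨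
        (f ⟨t + 1, ht⟩ = f ⟨t, by omega⟩ + 2 ∧
          ∃ k', L.getD (f ⟨t, by omega⟩ + 1) Vtx.mid = Vtx.clauseV k'))

/-- The `(k+1)`-st clause box of gadget `g` is traversed in pattern `⊓` by the
segment `L` (each of its vertices being visited exactly once, with possible detours
via clause vertices). -/
def SqcapBox {m h : ℕ} (L : List (Vtx m h)) (g : Fin (2 * m)) (k : Fin h) : Prop :=
  (∀ sec p, L.count (boxV g k sec p) = 1) ∧ ∃ flip, TraversedIn L (sqcapSeq g k flip)

/-- The `(k+1)`-st clause box of gadget `g` is traversed in pattern `⊔` by the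
segment `L`. -/
def SqcupBox {m h : ℕ} (L : List (Vtx m h)) (g : Fin (2 * m)) (k : Fin h) : Prop :=
  (∀ sec p, L.count (boxV g k sec p) = 1) ∧ ∃ flip, TraversedIn L (sqcupSeq g k flip)

/-- The gadget of `x_{i+1}^0`, as an index in `Fin (2*m)`. -/
def g0 {m : ℕ} (i : Fin m) : Fin (2 * m) := ⟨(i : ℕ), by have := i.isLt; omega⟩

/-- The gadget of `x_{i+1}^1`, as an index in `Fin (2*m)`. -/
def g1 {m : ℕ} (i : Fin m) : Fin (2 * m) := ⟨(i : ℕ) + m, by have := i.isLt; omega⟩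

/-- Gadget `g` is traversed in the `true` direction by the segment `L`: the long edges
are used to enter the left side `LS` from the top vertex and to leave from the right
side `RS` to the bottom vertex. -/
def TravTrue {m h : ℕ} (L : List (Vtx m h)) (g : Fin (2 * m)) : Prop :=
  (∃ n, n + 1 < L.length ∧ L.getD n Vtx.mid = topVtx g ∧
      L.getD (n + 1) Vtx.mid = Vtx.side g false 0) ∧
  (∃ n, n + 1 < L.length ∧ L.getD n Vtx.mid = Vtx.side g true 2 ∧
      L.getD (n + 1) Vtx.mid = botVtx g)

/-- Gadget `g` is traversed in the `false` direction by the segment `L`: the long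
edges are used to enter the right side `RS` from the top vertex and to leave from the
left side `LS` to the bottom vertex. -/
def TravFalse {m h : ℕ} (L : List (Vtx m h)) (g : Fin (2 * m)) : Prop :=
  (∃ n, n + 1 < L.length ∧ L.getD n Vtx.mid = topVtx g ∧
      L.getD (n + 1) Vtx.mid = Vtx.side g true 0) ∧
  (∃ n, n + 1 < L.length ∧ L.getD n Vtx.mid = Vtx.side g false 2 ∧
      L.getD (n + 1) Vtx.mid = botVtx g)

/-- Position of the first visit, within the first `m` fragments of the segment `L`
(i.e. at positions preceded by at most `m` occurrences of special vertices), of the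
pivot pair `{pvt_{i+1}^L, pvt_{i+1}^R}`. -/
noncomputable def firstVisitFH (m h : ℕ) (L : List (Vtx m h)) (i : Fin m) : ℕ :=
  sInf {n | n < L.length ∧ (L.take (n + 1)).countP isSpecial ≤ m ∧
    (L.getD n Vtx.mid = Vtx.pvt i false ∨ L.getD n Vtx.mid = Vtx.pvt i true)}

/-- Position of the first visit, within the last `m` fragments of the segment `L`
(i.e. at positions preceded by at least `m+1` occurrences of special vertices), of the
pivot pair `{pvt_{i+1}^L, pvt_{i+1}^R}`. -/
noncomputable def firstVisitSH (m h : ℕ) (L : List (Vtx m h)) (i : Fin m) : ℕ :=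
  sInf {n | n < L.length ∧ m + 1 ≤ (L.take (n + 1)).countP isSpecial ∧
    (L.getD n Vtx.mid = Vtx.pvt i false ∨ L.getD n Vtx.mid = Vtx.pvt i true)}

/-- `φ(j)` is satisfied: every clause is satisfied by the assignment `σ`, where the
variable `x_{i+1}^0` of clause `c_{k+1}` reads `σ j i` and the variable `x_{i+1}^1`
reads `σ (j+1) i`. -/
def SatisfiesAt (m h : ℕ) (occurs : Fin h → Fin (2 * m) → Option Bool)
    (σ : ℕ → Fin m → Bool) (j : ℕ) : Prop :=
  ∀ k : Fin h, ∃ (g : Fin (2 * m)) (b : Bool), occurs k g = some b ∧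
    (if hg : (g : ℕ) < m then σ j ⟨(g : ℕ), hg⟩ = b
     else σ (j + 1) ⟨(g : ℕ) - m, by have := g.isLt; omega⟩ = b)

/-! ### Auxiliary arithmetic -/

lemma T_eq_four (m h : ℕ) :
    T m h = 4 * (m * (3 * m + 1) * l h + m * (3 * m + 2) * l h + m * l h + 13 * h + 17) := by
  unfold T l; ring

lemma four_T_div_four (m h : ℕ) : 4 * (T m h / 4) = T m h := by
  conv_lhs => rw [T_eq_four, Nat.mul_div_cancel_left _ (by norm_num : 0 < 4)]
  rw [← T_eq_four]

lemma l_ge_34 (h : ℕ) : 34 ≤ l h := by unfold l; omega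

lemma two_h_lt_l (h : ℕ) : 2 * h < l h := by unfold l; omega

lemma two_l_le_T (m h : ℕ) : 2 * l h ≤ T m h := by
  unfold T
  nlinarith [Nat.zero_le (m * (2 * (3 * m + 1) * l h + l h)),
    Nat.zero_le (m * (2 * (3 * m + 2) * l h + l h)), Nat.zero_le h]

lemma four_l_le_T {m : ℕ} (hm : 2 < m) (h : ℕ) : 4 * l h ≤ T m h := by
  rw [T_eq_four]
  have h1 : 1 * l h ≤ m * (3 * m + 1) * l h :=
    Nat.mul_le_mul_right _ (by nlinarith)
  nlinarith [Nat.zero_le (m * (3 * m + 2) * l h), Nat.zero_le (m * l h)]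

lemma l_le_T_div_four {m : ℕ} (hm : 2 < m) (h : ℕ) : l h ≤ T m h / 4 := by
  have h1 := four_l_le_T hm h
  have h2 := four_T_div_four m h
  omega

lemma one_le_T_div_four (m h : ℕ) : 1 ≤ T m h / 4 := by
  have := two_l_le_T m h; have := l_ge_34 h; omega

lemma le_longTop (m h : ℕ) (g : Fin (2 * m)) : l h ≤ longTop m h g := by
  unfold longTop; split <;> exact Nat.le_mul_of_pos_left _ (by omega)

lemma le_longBot (m h : ℕ) (g : Fin (2 * m)) : l h ≤ longBot m h g := by
  unfold longBot; split <;> exact Nat.le_mul_of_pos_left _ (by omega)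
/-! ### Flight-time bounds -/

lemma adjFT_one_le {m h : ℕ} {occurs : Fin h → Fin (2 * m) → Option Bool} {x y : Vtx m h} {n : ℕ}
    (e : adjFT m h occurs x y = some n) : 1 ≤ n := by
  have h1 : ∀ g : Fin (2 * m), 1 ≤ longTop m h g :=
    fun g => le_trans (by have := l_ge_34 h; omega) (le_longTop m h g)
  have h2 : ∀ g : Fin (2 * m), 1 ≤ longBot m h g :=
    fun g => le_trans (by have := l_ge_34 h; omega) (le_longBot m h g)
  have h3 := one_le_T_div_four m h
  unfold adjFT at e
  split at e <;> (try split_ifs at e) <;>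
  first
    | exact (Option.some_ne_none _ e.symm).elim
    | (obtain rfl := Option.some.inj e; first | omega | exact h1 _ | exact h2 _ | exact h3)

lemma FT_def {m h : ℕ} (occurs : Fin h → Fin (2 * m) → Option Bool) (x y : Vtx m h) (hxy : x ≠ y) :
    FT m h occurs x y =
      (match adjFT m h occurs x y with
        | some n => n
        | none =>
          match adjFT m h occurs y x with
          | some n => n
          | none => 2 * T m h) := by
  unfold FT; rw [if_neg hxy]

lemma FT_pos {m h : ℕ} (occurs : Fin h → Fin (2 * m) → Option Bool) {x y : Vtx m h} (hxy : x ≠ y) :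
    1 ≤ FT m h occurs x y := by
  have h5 : 1 ≤ 2 * T m h := by have := two_l_le_T m h; have := l_ge_34 h; omega
  rw [FT_def occurs x y hxy]
  cases e1 : adjFT m h occurs x y with
  | some n => exact adjFT_one_le e1
  | none =>
    cases e2 : adjFT m h occurs y x with
    | some n => exact adjFT_one_le e2
    | none => exact h5
lemma FT_from_mid {m h : ℕ} (occurs : Fin h → Fin (2 * m) → Option Bool) (x : Vtx m h)
    (hx : x ≠ Vtx.mid) : T m h / 4 ≤ FT m h occurs Vtx.mid x := by
  have hd : T m h / 4 ≤ 2 * T m h := le_trans (Nat.div_le_self _ _) (by omega)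
  cases x <;>
  first
    | exact absurd rfl hx
    | exact le_of_eq rfl
    | exact le_of_le_of_eq hd rfl

lemma FT_to_mid {m h : ℕ} (occurs : Fin h → Fin (2 * m) → Option Bool) (x : Vtx m h)
    (hx : x ≠ Vtx.mid) : T m h / 4 ≤ FT m h occurs x Vtx.mid := by
  have hd : T m h / 4 ≤ 2 * T m h := le_trans (Nat.div_le_self _ _) (by omega)
  cases x <;>
  first
    | exact absurd rfl hx
    | exact le_of_eq rfl
    | exact le_of_le_of_eq hd rfl

lemma FT_from_mid_far {m h : ℕ} (occurs : Fin h → Fin (2 * m) → Option Bool) (x : Vtx m h)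
    (h1 : x ≠ Vtx.mid) (h2 : x ≠ Vtx.top) (h3 : x ≠ Vtx.bot) :
    FT m h occurs Vtx.mid x = 2 * T m h := by
  cases x <;>
  first
    | exact absurd rfl h1
    | exact absurd rfl h2
    | exact absurd rfl h3
    | exact rfl
lemma l_le_2T {m : ℕ} (hm : 2 < m) (h : ℕ) : l h ≤ 2 * T m h := by
  have := four_l_le_T hm h; omega

lemma FT_from_top {m h : ℕ} (hm : 2 < m) (occurs : Fin h → Fin (2 * m) → Option Bool)
    (x : Vtx m h) (hx : x ≠ Vtx.top) : l h ≤ FT m h occurs Vtx.top x := by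
  have hd : l h ≤ 2 * T m h := l_le_2T hm h
  have hd4 : l h ≤ T m h / 4 := l_le_T_div_four hm h
  cases x with
  | side g r p =>
    by_cases hc : (g : ℕ) = 0 ∧ (p : ℕ) = 0
    · refine le_trans (le_longTop m h g) (le_of_eq ?_)
      simp [FT, adjFT, hc]
    · refine le_trans hd (le_of_eq ?_)
      simp [FT, adjFT, hc]
      rw [if_neg (fun hc' => hc ⟨hc'.1, congrArg Fin.val hc'.2⟩)]
  | mid => exact le_of_le_of_eq hd4 rfl
  | _ =>
    first
      | exact absurd rfl hx
      | exact le_of_le_of_eq hd rfl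

lemma FT_to_top {m h : ℕ} (hm : 2 < m) (occurs : Fin h → Fin (2 * m) → Option Bool)
    (x : Vtx m h) (hx : x ≠ Vtx.top) : l h ≤ FT m h occurs x Vtx.top := by
  have hd : l h ≤ 2 * T m h := l_le_2T hm h
  have hd4 : l h ≤ T m h / 4 := l_le_T_div_four hm h
  cases x with
  | side g r p =>
    by_cases hc : (g : ℕ) = 0 ∧ (p : ℕ) = 0
    · refine le_trans (le_longTop m h g) (le_of_eq ?_)
      simp [FT, adjFT, hc]
    · refine le_trans hd (le_of_eq ?_)
      simp [FT, adjFT, hc]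
      rw [if_neg (fun hc' => hc ⟨hc'.1, congrArg Fin.val hc'.2⟩)]
  | mid => exact le_of_le_of_eq hd4 rfl
  | _ =>
    first
      | exact absurd rfl hx
      | exact le_of_le_of_eq hd rfl

lemma FT_from_bot {m h : ℕ} (hm : 2 < m) (occurs : Fin h → Fin (2 * m) → Option Bool)
    (x : Vtx m h) (hx : x ≠ Vtx.bot) : l h ≤ FT m h occurs Vtx.bot x := by
  have hd : l h ≤ 2 * T m h := l_le_2T hm h
  have hd4 : l h ≤ T m h / 4 := l_le_T_div_four hm h
  cases x with
  | side g r p =>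
    by_cases hc : (g : ℕ) = 2 * m - 1 ∧ (p : ℕ) = 2
    · refine le_trans (le_longBot m h g) (le_of_eq ?_)
      simp [FT, adjFT, hc]
    · refine le_trans hd (le_of_eq ?_)
      simp [FT, adjFT, hc]
  | mid => exact le_of_le_of_eq hd4 rfl
  | _ =>
    first
      | exact absurd rfl hx
      | exact le_of_le_of_eq hd rfl

lemma FT_to_bot {m h : ℕ} (hm : 2 < m) (occurs : Fin h → Fin (2 * m) → Option Bool)
    (x : Vtx m h) (hx : x ≠ Vtx.bot) : l h ≤ FT m h occurs x Vtx.bot := by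
  have hd : l h ≤ 2 * T m h := l_le_2T hm h
  have hd4 : l h ≤ T m h / 4 := l_le_T_div_four hm h
  cases x with
  | side g r p =>
    by_cases hc : (g : ℕ) = 2 * m - 1 ∧ (p : ℕ) = 2
    · refine le_trans (le_longBot m h g) (le_of_eq ?_)
      simp [FT, adjFT, hc]
    · refine le_trans hd (le_of_eq ?_)
      simp [FT, adjFT, hc]
  | mid => exact le_of_le_of_eq hd4 rfl
  | _ =>
    first
      | exact absurd rfl hx
      | exact le_of_le_of_eq hd rfl

lemma FT_top_bot {m h : ℕ} (occurs : Fin h → Fin (2 * m) → Option Bool) :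
    FT m h occurs Vtx.top Vtx.bot = 2 * T m h := rfl

lemma FT_bot_top {m h : ℕ} (occurs : Fin h → Fin (2 * m) → Option Bool) :
    FT m h occurs Vtx.bot Vtx.top = 2 * T m h := rfl
/-! ### Duration lemmas -/

lemma dur_cat {V : Type*} (F : V → V → ℕ) (s : ℕ → V) {a b c : ℕ} (hab : a ≤ b) (hbc : b ≤ c) :
    dur F s a b + dur F s b c = dur F s a c :=
  Finset.sum_Ico_consecutive _ hab hbc

lemma dur_single {V : Type*} (F : V → V → ℕ) (s : ℕ → V) (n : ℕ) :
    dur F s n (n + 1) = F (s n) (s (n + 1)) := by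
  unfold dur; rw [Nat.Ico_succ_singleton, Finset.sum_singleton]

lemma edge_le_dur {V : Type*} (F : V → V → ℕ) (s : ℕ → V) {a i b : ℕ} (h1 : a ≤ i) (h2 : i < b) :
    F (s i) (s (i + 1)) ≤ dur F s a b :=
  Finset.single_le_sum (f := fun i => F (s i) (s (i + 1))) (fun _ _ => Nat.zero_le _)
    (Finset.mem_Ico.mpr ⟨h1, h2⟩)

lemma dur_mono {V : Type*} (F : V → V → ℕ) (s : ℕ → V) {a b a' b' : ℕ} (h1 : a' ≤ a)
    (h2 : b ≤ b') : dur F s a b ≤ dur F s a' b' :=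
  Finset.sum_le_sum_of_subset (Finset.Ico_subset_Ico h1 h2)

lemma sub_le_dur {V : Type*} (F : V → V → ℕ) (s : ℕ → V)
    (hd : ∀ n, s n ≠ s (n + 1)) (hpos : ∀ x y : V, x ≠ y → 1 ≤ F x y) (a b : ℕ) :
    b - a ≤ dur F s a b := by
  calc b - a = ∑ _i ∈ Finset.Ico a b, 1 := by simp [Nat.card_Ico]
    _ ≤ dur F s a b := Finset.sum_le_sum fun i _ => hpos _ _ (hd i)

/-! ### Structure of the word and the periodic path -/

/-- Starting position of the `j`-th block in the word. -/
def Start {m h p : ℕ} (segs : Fin p → List (Vtx m h)) (j : ℕ) : ℕ :=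
  ((((List.ofFn (fun j => Vtx.mid :: segs j)).take j)).map List.length).sum

lemma flatten_drop_sum {α : Type*} (C : List (List α)) (j : ℕ) :
    C.flatten.drop (((C.take j).map List.length).sum) = (C.drop j).flatten := by
  induction C generalizing j with
  | nil => simp
  | cons c C ih =>
    cases j with
    | zero => simp
    | succ j =>
      simp only [List.take_succ_cons, List.map_cons, List.sum_cons, List.flatten_cons,
        List.drop_succ_cons]
      rw [List.drop_append, List.drop_eq_nil_of_le (by omega), List.nil_append,
        Nat.add_sub_cancel_left]
      exact ih j

lemma length_word {m h p : ℕ} (segs : Fin p → List (Vtx m h)) :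
    (word segs).length = Start segs p := by
  unfold word Start
  rw [List.take_of_length_le (by simp)]
  exact List.length_flatten

lemma drop_word {m h p : ℕ} (segs : Fin p → List (Vtx m h)) (j : Fin p) :
    (word segs).drop (Start segs j) =
      (Vtx.mid :: segs j) ++ ((List.ofFn (fun j => Vtx.mid :: segs j)).drop ((j : ℕ) + 1)).flatten := by
  unfold word Start
  rw [flatten_drop_sum]
  rw [List.drop_eq_getElem_cons (by simpa using j.isLt)]
  rw [List.flatten_cons]
  congr 2
  simp [List.getElem_ofFn]

lemma start_succ {m h p : ℕ} (segs : Fin p → List (Vtx m h)) (j : Fin p) :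
    Start segs ((j : ℕ) + 1) = Start segs (j : ℕ) + 1 + (segs j).length := by
  unfold Start
  rw [List.take_succ]
  rw [List.getElem?_eq_getElem (by simpa using j.isLt)]
  simp [List.getElem_ofFn]
  omega

lemma start_le {m h p : ℕ} (segs : Fin p → List (Vtx m h)) (j : Fin p) :
    Start segs (j : ℕ) + 1 + (segs j).length ≤ (word segs).length := by
  have hd := drop_word segs j
  have hl := congrArg List.length hd
  rw [List.length_drop] at hl
  simp only [List.length_append, List.length_cons] at hl
  omega
lemma getD_word {m h p : ℕ} (segs : Fin p → List (Vtx m h)) (j : Fin p) {t : ℕ}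
    (ht : t ≤ (segs j).length) :
    (word segs).getD (Start segs (j : ℕ) + t) Vtx.mid = (Vtx.mid :: segs j).getD t Vtx.mid := by
  have hle := start_le segs j
  have h1 : Start segs (j : ℕ) + t < (word segs).length := by omega
  have h2 : t < ((word segs).drop (Start segs (j : ℕ))).length := by
    rw [List.length_drop]; omega
  have h4 : t < (Vtx.mid :: segs j).length := by simp; omega
  rw [List.getD_eq_getElem _ _ h1, List.getD_eq_getElem _ _ h4]
  have h3 : (word segs)[Start segs (j : ℕ) + t] = ((word segs).drop (Start segs (j : ℕ)))[t]'h2 :=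
    by rw [List.getElem_drop]
  rw [h3]
  simp only [drop_word segs j]
  exact List.getElem_append_left h4

lemma path_spec {m h p : ℕ} (segs : Fin p → List (Vtx m h)) (j : Fin p) (k t : ℕ)
    (ht : t ≤ (segs j).length) :
    pathOf segs (Start segs (j : ℕ) + k * (word segs).length + t)
      = (Vtx.mid :: segs j).getD t Vtx.mid := by
  have hle := start_le segs j
  show (word segs).getD _ Vtx.mid = _
  rw [show Start segs (j : ℕ) + k * (word segs).length + t
      = (Start segs (j : ℕ) + t) + k * (word segs).length by ring]
  rw [Nat.add_mul_mod_self_right, Nat.mod_eq_of_lt (by omega)]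
  exact getD_word segs j ht

lemma path_zero {m h p : ℕ} (hp : 0 < p) (segs : Fin p → List (Vtx m h)) :
    pathOf segs 0 = Vtx.mid := by
  have h0 : Start segs ((⟨0, hp⟩ : Fin p) : ℕ) = 0 := by simp [Start]
  have := path_spec segs ⟨0, hp⟩ 0 0 (Nat.zero_le _)
  rw [h0] at this
  simpa using this

lemma path_start_mid {m h p : ℕ} (segs : Fin p → List (Vtx m h)) (j : Fin p) (k : ℕ) :
    pathOf segs (Start segs (j : ℕ) + k * (word segs).length) = Vtx.mid := by
  have := path_spec segs j k 0 (Nat.zero_le _)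
  simpa using this

lemma path_after_mid {m h p : ℕ} (hp : 0 < p) (segs : Fin p → List (Vtx m h)) (j : Fin p) (k : ℕ) :
    pathOf segs (Start segs (j : ℕ) + k * (word segs).length + 1 + (segs j).length)
      = Vtx.mid := by
  have harr : Start segs (j : ℕ) + k * (word segs).length + 1 + (segs j).length
      = Start segs ((j : ℕ) + 1) + k * (word segs).length := by
    rw [start_succ segs j]; ring
  rw [harr]
  by_cases hj : (j : ℕ) + 1 < p
  · exact path_start_mid segs ⟨(j : ℕ) + 1, hj⟩ k
  · have hj' : (j : ℕ) + 1 = p := by have := j.isLt; omega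
    have hN : Start segs ((j : ℕ) + 1) = (word segs).length := by
      rw [hj']; exact (length_word segs).symm
    have h0 : Start segs ((⟨0, hp⟩ : Fin p) : ℕ) = 0 := by simp [Start]
    have := path_start_mid segs ⟨0, hp⟩ (k + 1)
    rw [h0] at this
    rw [show Start segs ((j : ℕ) + 1) + k * (word segs).length
        = 0 + (k + 1) * (word segs).length by rw [hN]; ring]
    exact this

lemma path_in_seg {m h p : ℕ} (segs : Fin p → List (Vtx m h)) (j : Fin p) (k : ℕ) {t : ℕ}
    (h1 : 1 ≤ t) (ht : t ≤ (segs j).length) :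
    pathOf segs (Start segs (j : ℕ) + k * (word segs).length + t) ∈ segs j := by
  rw [path_spec segs j k t ht]
  obtain ⟨t', rfl⟩ : ∃ t', t = t' + 1 := ⟨t - 1, by omega⟩
  rw [List.getD_cons_succ]
  rw [List.getD_eq_getElem _ _ (by omega)]
  exact List.getElem_mem _
lemma block_exists {m h p : ℕ} (hp : 0 < p) (segs : Fin p → List (Vtx m h)) (j : Fin p) (M : ℕ) :
    ∃ q, M ≤ q ∧ (word segs).length ≤ q ∧
      pathOf segs q = Vtx.mid ∧
      pathOf segs (q + 1 + (segs j).length) = Vtx.mid ∧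
      (∀ t, 1 ≤ t → t ≤ (segs j).length → pathOf segs (q + t) ∈ segs j) ∧
      (∀ t, t ≤ (segs j).length →
        pathOf segs (q + t) = (Vtx.mid :: segs j).getD t Vtx.mid) := by
  set N := (word segs).length with hN
  have hNpos : 0 < N := by have := start_le segs j; omega
  refine ⟨Start segs (j : ℕ) + (M + 1) * N, ?_, ?_, ?_, ?_, ?_, ?_⟩
  · calc M ≤ M + 1 := by omega
      _ ≤ (M + 1) * N := Nat.le_mul_of_pos_right _ hNpos
      _ ≤ _ := by omega
  · calc N = 1 * N := by ring
      _ ≤ (M + 1) * N := Nat.mul_le_mul_right _ (by omega)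
      _ ≤ _ := by omega
  · exact path_start_mid segs j (M + 1)
  · exact path_after_mid hp segs j (M + 1)
  · intro t h1 h2
    exact path_in_seg segs j (M + 1) h1 h2
  · intro t ht
    exact path_spec segs j (M + 1) t ht

lemma exists_early_occ {m h p : ℕ} (hp : 0 < p) (segs : Fin p → List (Vtx m h))
    {RD' : Vtx m h → ℕ} {FT' : Vtx m h → Vtx m h → ℕ}
    (hsol : IsSolution RD' FT' (pathOf segs))
    (u : Vtx m h) (hu : u ≠ Vtx.mid) {q : ℕ} (hq : (word segs).length ≤ q) :
    ∃ n0, 0 < n0 ∧ n0 < q ∧ pathOf segs n0 = u := by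
  set N := (word segs).length with hN
  have hNpos : 0 < N := by have := start_le segs ⟨0, hp⟩; omega
  obtain ⟨n, -, hn⟩ := hsol.2.1 u 0
  refine ⟨n % N, ?_, ?_, ?_⟩
  · rcases Nat.eq_zero_or_pos (n % N) with h0 | h0
    · exfalso
      have : pathOf segs n = pathOf segs 0 := by
        show (word segs).getD _ Vtx.mid = (word segs).getD _ Vtx.mid
        rw [Nat.zero_mod, h0]
      rw [path_zero hp segs] at this
      rw [hn] at this
      exact hu this
    · exact h0
  · exact lt_of_lt_of_le (Nat.mod_lt _ hNpos) hq
  · have : pathOf segs (n % N) = pathOf segs n := by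
      show (word segs).getD _ Vtx.mid = (word segs).getD _ Vtx.mid
      rw [Nat.mod_mod_of_dvd _ dvd_rfl]
    rw [this, hn]
lemma key {m h : ℕ} (occurs : Fin h → Fin (2 * m) → Option Bool) {p : ℕ}
    (segs : Fin p → List (Vtx m h))
    (hsol : IsSolution (RD m h) (FT m h occurs) (pathOf segs))
    (u : Vtx m h) (hu : u ≠ Vtx.mid)
    (q len : ℕ) (hq : 2 ≤ q) (hlen : 1 ≤ len)
    (hocc : ∃ n0, 0 < n0 ∧ n0 < q ∧ pathOf segs n0 = u)
    (hmq : pathOf segs q = Vtx.mid)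
    (hmq' : pathOf segs (q + 1 + len) = Vtx.mid)
    (hseg : ∀ i, q < i → i < q + 1 + len → pathOf segs i ≠ u) :
    ∃ a b, a ≤ q - 1 ∧ pathOf segs a = u ∧ q + 1 + len < b ∧ pathOf segs b = u ∧
      dur (FT m h occurs) (pathOf segs) a (q - 1)
        + FT m h occurs (pathOf segs (q - 1)) (pathOf segs q)
        + FT m h occurs (pathOf segs q) (pathOf segs (q + 1))
        + dur (FT m h occurs) (pathOf segs) (q + 1) (q + len)
        + FT m h occurs (pathOf segs (q + len)) (pathOf segs (q + 1 + len))
        + FT m h occurs (pathOf segs (q + 1 + len)) (pathOf segs (q + 2 + len))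
        + dur (FT m h occurs) (pathOf segs) (q + 2 + len) b ≤ RD m h u := by
  classical
  set s := pathOf segs with hs
  set F := FT m h occurs with hF
  obtain ⟨n0, hn0pos, hn0lt, hn0⟩ := hocc
  set a := Nat.findGreatest (fun n => s n = u) (q - 1) with ha_def
  have ha : s a = u :=
    Nat.findGreatest_spec (P := fun n => s n = u) (m := n0) (n := q - 1) (by omega) hn0
  have hamax : ∀ i, a < i → i ≤ q - 1 → s i ≠ u := fun i h1 h2 =>
    Nat.findGreatest_is_greatest h1 h2
  have haq : a ≤ q - 1 := Nat.findGreatest_le _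
  have hbex : ∃ n, q + 1 + len < n ∧ s n = u := by
    obtain ⟨n, hn1, hn2⟩ := hsol.2.1 u (q + 2 + len)
    exact ⟨n, by omega, hn2⟩
  set b := Nat.find hbex with hb_def
  obtain ⟨hb1, hb2⟩ := Nat.find_spec hbex
  have hbmin : ∀ i, i < b → ¬(q + 1 + len < i ∧ s i = u) := fun i hi => Nat.find_min hbex hi
  have hab : a < b := by omega
  have hcons : ∀ i, a < i → i < b → s i ≠ u := by
    intro i h1 h2
    by_cases hi : i ≤ q - 1
    · exact hamax i h1 hi
    · by_cases hi2 : q + 1 + len < i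
      · exact fun he => hbmin i h2 ⟨hi2, he⟩
      · have hiq : q ≤ i := by omega
        rcases Nat.eq_or_lt_of_le hiq with rfl | h4
        · rw [hmq]; exact fun e => hu e.symm
        · have hile : i ≤ q + 1 + len := by omega
          rcases Nat.eq_or_lt_of_le hile with heq | h5
          · subst heq; rw [hmq']; exact fun e => hu e.symm
          · exact hseg i h4 h5
  have hdur : dur F s a b ≤ RD m h u := hsol.2.2 u a b hab ha hb2 hcons
  have d1 : dur F s (q - 1) q = F (s (q - 1)) (s q) := by
    have := dur_single F s (q - 1); rw [show q - 1 + 1 = q by omega] at this; exact this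
  have d2 : dur F s q (q + 1) = F (s q) (s (q + 1)) := dur_single F s q
  have d3 : dur F s (q + len) (q + 1 + len) = F (s (q + len)) (s (q + 1 + len)) := by
    have := dur_single F s (q + len); rw [show q + len + 1 = q + 1 + len by omega] at this
    exact this
  have d4 : dur F s (q + 1 + len) (q + 2 + len) = F (s (q + 1 + len)) (s (q + 2 + len)) := by
    have := dur_single F s (q + 1 + len)
    rw [show q + 1 + len + 1 = q + 2 + len by omega] at this
    exact this
  have hchain : dur F s a (q - 1) + F (s (q - 1)) (s q) + F (s q) (s (q + 1))
      + dur F s (q + 1) (q + len) + F (s (q + len)) (s (q + 1 + len))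
      + F (s (q + 1 + len)) (s (q + 2 + len)) + dur F s (q + 2 + len) b = dur F s a b := by
    rw [← d1, ← d2, ← d3, ← d4]
    rw [dur_cat F s (show a ≤ q - 1 from haq) (show q - 1 ≤ q by omega),
        dur_cat F s (show a ≤ q by omega) (show q ≤ q + 1 by omega),
        dur_cat F s (show a ≤ q + 1 by omega) (show q + 1 ≤ q + len by omega),
        dur_cat F s (show a ≤ q + len by omega) (show q + len ≤ q + 1 + len by omega),
        dur_cat F s (show a ≤ q + 1 + len by omega) (show q + 1 + len ≤ q + 2 + len by omega),
        dur_cat F s (show a ≤ q + 2 + len by omega) (show q + 2 + len ≤ b by omega)]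
  exact ⟨a, b, haq, ha, hb1, hb2, by rw [hchain]; exact hdur⟩
lemma key' {m h : ℕ} (hm : 2 < m) (occurs : Fin h → Fin (2 * m) → Option Bool) {p : ℕ}
    (segs : Fin p → List (Vtx m h))
    (hsol : IsSolution (RD m h) (FT m h occurs) (pathOf segs))
    (u : Vtx m h) (hu : u ≠ Vtx.mid)
    (q len : ℕ) (hq : 2 ≤ q) (hlen : 1 ≤ len)
    (hocc : ∃ n0, 0 < n0 ∧ n0 < q ∧ pathOf segs n0 = u)
    (hmq : pathOf segs q = Vtx.mid)
    (hmq' : pathOf segs (q + 1 + len) = Vtx.mid)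
    (hseg : ∀ i, q < i → i < q + 1 + len → pathOf segs i ≠ u) :
    ∃ a b, a ≤ q - 1 ∧ pathOf segs a = u ∧ q + 1 + len < b ∧ pathOf segs b = u ∧
      dur (FT m h occurs) (pathOf segs) a (q - 1)
        + dur (FT m h occurs) (pathOf segs) (q + 1) (q + len)
        + dur (FT m h occurs) (pathOf segs) (q + 2 + len) b + T m h ≤ RD m h u ∧
      FT m h occurs (pathOf segs q) (pathOf segs (q + 1)) ≤ RD m h u := by
  obtain ⟨a, b, ha1, ha2, hb1, hb2, hkey⟩ :=
    key occurs segs hsol u hu q len hq hlen hocc hmq hmq' hseg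
  set s := pathOf segs with hs
  set F := FT m h occurs with hF
  have e1 : s (q - 1) ≠ Vtx.mid := by
    have e := hsol.1 (q - 1); rw [show q - 1 + 1 = q by omega, hmq] at e; exact e
  have e2 : s (q + 1) ≠ Vtx.mid := by
    have e := hsol.1 q; rw [hmq] at e; exact (Ne.symm e)
  have e3 : s (q + len) ≠ Vtx.mid := by
    have e := hsol.1 (q + len); rw [show q + len + 1 = q + 1 + len by omega, hmq'] at e; exact e
  have e4 : s (q + 2 + len) ≠ Vtx.mid := by
    have e := hsol.1 (q + 1 + len)
    rw [show q + 1 + len + 1 = q + 2 + len by omega, hmq'] at e; exact (Ne.symm e)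
  have b1 : T m h / 4 ≤ F (s (q - 1)) (s q) := by rw [hmq]; exact FT_to_mid occurs _ e1
  have b2 : T m h / 4 ≤ F (s q) (s (q + 1)) := by rw [hmq]; exact FT_from_mid occurs _ e2
  have b3 : T m h / 4 ≤ F (s (q + len)) (s (q + 1 + len)) := by
    rw [hmq']; exact FT_to_mid occurs _ e3
  have b4 : T m h / 4 ≤ F (s (q + 1 + len)) (s (q + 2 + len)) := by
    rw [hmq']; exact FT_from_mid occurs _ e4
  have hT4 := four_T_div_four m h
  exact ⟨a, b, ha1, ha2, hb1, hb2, by omega, by omega⟩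

lemma seg_avoid {m h p : ℕ} (segs : Fin p → List (Vtx m h)) (j : Fin p) (q : ℕ)
    (hmem' : ∀ t, 1 ≤ t → t ≤ (segs j).length → pathOf segs (q + t) ∈ segs j)
    (u : Vtx m h) (hu : u ∉ segs j) :
    ∀ i, q < i → i < q + 1 + (segs j).length → pathOf segs i ≠ u := by
  intro i h1 h2
  have h5 := hmem' (i - q) (by omega) (by omega)
  rw [show q + (i - q) = i by omega] at h5
  exact fun e => hu (e ▸ h5)

lemma extreme_mem {m h : ℕ} (hm : 2 < m) (occurs : Fin h → Fin (2 * m) → Option Bool) {p : ℕ}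
    (hp : 0 < p) (segs : Fin p → List (Vtx m h)) (hne : ∀ j, segs j ≠ [])
    (hsol : IsSolution (RD m h) (FT m h occurs) (pathOf segs))
    (v : Vtx m h) (hv : v = Vtx.top ∨ v = Vtx.bot) (j : Fin p) : v ∈ segs j := by
  by_contra hmem
  have hlen : 1 ≤ (segs j).length := List.length_pos_iff.mpr (hne j)
  obtain ⟨q, hq2, hqN, hmq, hmq', hmem', hgetD⟩ := block_exists hp segs j 2
  have hvm : v ≠ Vtx.mid := by rcases hv with rfl | rfl <;> simp
  have hocc := exists_early_occ hp segs hsol v hvm hqN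
  obtain ⟨a, b, ha1, ha2, hb1, hb2, hkey, hkey2⟩ :=
    key' hm occurs segs hsol v hvm q _ (by omega) hlen hocc hmq hmq'
      (seg_avoid segs j q hmem' v hmem)
  have hRDv : RD m h v = T m h := by rcases hv with rfl | rfl <;> rfl
  have hpos : ∀ x y : Vtx m h, x ≠ y → 1 ≤ FT m h occurs x y :=
    fun x y hxy => FT_pos occurs hxy
  have hsub1 := sub_le_dur (FT m h occurs) (pathOf segs) hsol.1 hpos a (q - 1)
  have hsub2 := sub_le_dur (FT m h occurs) (pathOf segs) hsol.1 hpos (q + 1) (q + (segs j).length)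
  rw [hRDv] at hkey hkey2
  have ha' : a = q - 1 := by omega
  have hsq1 : pathOf segs (q - 1) = v := ha' ▸ ha2
  have hlen1 : (segs j).length = 1 := by omega
  have hw : pathOf segs (q + 1) ∈ segs j := hmem' 1 (le_refl 1) hlen
  have hwm : pathOf segs (q + 1) ≠ Vtx.mid := by
    have e := hsol.1 q; rw [hmq] at e; exact (Ne.symm e)
  have hwtb : pathOf segs (q + 1) = Vtx.top ∨ pathOf segs (q + 1) = Vtx.bot := by
    by_contra hc
    push_neg at hc
    have heq : FT m h occurs (pathOf segs q) (pathOf segs (q + 1)) = 2 * T m h := by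
      rw [hmq]; exact FT_from_mid_far occurs _ hwm hc.1 hc.2
    have h4l := four_l_le_T hm h
    have := l_ge_34 h
    omega
  obtain ⟨w0, hw0⟩ := List.length_eq_one_iff.mp hlen1
  rw [hw0, List.mem_singleton] at hw
  have hu2lt : 0 < 2 * m - 1 := by omega
  have hu2m : (Vtx.shared ⟨0, hu2lt⟩ : Vtx m h) ≠ Vtx.mid := by simp
  have hu2mem : (Vtx.shared ⟨0, hu2lt⟩ : Vtx m h) ∉ segs j := by
    rw [hw0]
    intro hin
    rw [List.mem_singleton] at hin
    have hcon : (Vtx.shared ⟨0, hu2lt⟩ : Vtx m h) = pathOf segs (q + 1) := by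
      rw [hin, ← hw]
    rcases hwtb with he | he <;> rw [he] at hcon <;> exact absurd hcon (by simp)
  have hocc2 := exists_early_occ hp segs hsol _ hu2m hqN
  obtain ⟨a2, b2, ha21, ha22, -, -, hkey21, -⟩ :=
    key' hm occurs segs hsol _ hu2m q _ (by omega) hlen hocc2 hmq hmq'
      (seg_avoid segs j q hmem' _ hu2mem)
  have hRD2 : RD m h (Vtx.shared ⟨0, hu2lt⟩ : Vtx m h) = T m h + 2 * h := rfl
  rw [hRD2] at hkey21
  have ha2ne : a2 ≠ q - 1 := by
    intro e
    rw [e, hsq1] at ha22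
    rcases hv with rfl | rfl <;> exact absurd ha22 (by simp)
  have hedge : FT m h occurs (pathOf segs (q - 2)) (pathOf segs (q - 2 + 1))
      ≤ dur (FT m h occurs) (pathOf segs) a2 (q - 1) :=
    edge_le_dur (FT m h occurs) (pathOf segs) (by omega) (by omega)
  rw [show q - 2 + 1 = q - 1 by omega] at hedge
  have hne2 : pathOf segs (q - 2) ≠ v := by
    have e := hsol.1 (q - 2); rw [show q - 2 + 1 = q - 1 by omega, hsq1] at e; exact e
  have hlow : l h ≤ FT m h occurs (pathOf segs (q - 2)) (pathOf segs (q - 1)) := by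
    rw [hsq1]
    rcases hv with rfl | rfl
    · exact FT_to_top hm occurs _ hne2
    · exact FT_to_bot hm occurs _ hne2
  have := two_h_lt_l h
  omega
lemma interior_lb {m h : ℕ} (hm : 2 < m) (occurs : Fin h → Fin (2 * m) → Option Bool) {p : ℕ}
    (segs : Fin p → List (Vtx m h))
    (hsol : IsSolution (RD m h) (FT m h occurs) (pathOf segs))
    {α β lo hi : ℕ} (hlo : lo ≤ α) (hαβ : α < β) (hhi : β ≤ hi)
    (hx : pathOf segs α = Vtx.top ∧ pathOf segs β = Vtx.bot ∨
          pathOf segs α = Vtx.bot ∧ pathOf segs β = Vtx.top) :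
    2 * l h ≤ dur (FT m h occurs) (pathOf segs) lo hi := by
  have hmono : dur (FT m h occurs) (pathOf segs) α β ≤ dur (FT m h occurs) (pathOf segs) lo hi :=
    dur_mono _ _ hlo hhi
  have h4l := four_l_le_T hm h
  suffices hsuf : 2 * l h ≤ dur (FT m h occurs) (pathOf segs) α β by omega
  by_cases hadj : β = α + 1
  · subst hadj
    rw [dur_single]
    rcases hx with ⟨e1, e2⟩ | ⟨e1, e2⟩ <;> rw [e1, e2]
    · rw [FT_top_bot]; omega
    · rw [FT_bot_top]; omega
  · have hsep : α + 1 < β := by omega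
    have hsplit : FT m h occurs (pathOf segs α) (pathOf segs (α + 1))
        + dur (FT m h occurs) (pathOf segs) (α + 1) β
        = dur (FT m h occurs) (pathOf segs) α β := by
      rw [← dur_single (FT m h occurs) (pathOf segs) α]
      exact dur_cat _ _ (by omega) (by omega)
    have he2 : FT m h occurs (pathOf segs (β - 1)) (pathOf segs (β - 1 + 1))
        ≤ dur (FT m h occurs) (pathOf segs) (α + 1) β :=
      edge_le_dur _ _ (by omega) (by omega)
    rw [show β - 1 + 1 = β by omega] at he2
    have hd1 := hsol.1 α
    have hd2 := hsol.1 (β - 1)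
    rw [show β - 1 + 1 = β by omega] at hd2
    rcases hx with ⟨e1, e2⟩ | ⟨e1, e2⟩
    · rw [e1] at hd1
      rw [e2] at hd2
      have hb1 : l h ≤ FT m h occurs (pathOf segs α) (pathOf segs (α + 1)) := by
        rw [e1]; exact FT_from_top hm occurs _ (Ne.symm hd1)
      have hb2 : l h ≤ FT m h occurs (pathOf segs (β - 1)) (pathOf segs β) := by
        rw [e2]; exact FT_to_bot hm occurs _ hd2
      omega
    · rw [e1] at hd1
      rw [e2] at hd2
      have hb1 : l h ≤ FT m h occurs (pathOf segs α) (pathOf segs (α + 1)) := by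
        rw [e1]; exact FT_from_bot hm occurs _ (Ne.symm hd1)
      have hb2 : l h ≤ FT m h occurs (pathOf segs (β - 1)) (pathOf segs β) := by
        rw [e2]; exact FT_to_top hm occurs _ hd2
      omega

/-- Every segment contains every vertex other than `v_mid` whose
relative deadline is at most `T + l + 2h`. -/
theorem segment_contains_small_deadline_vertices (m h : ℕ) (hm : 2 < m) (hh : 0 < h)
    (occurs : Fin h → Fin (2 * m) → Option Bool)
    (p : ℕ) (hp : 0 < p) (segs : Fin p → List (Vtx m h))
    (hne : ∀ j, segs j ≠ [])
    (hmid : ∀ j, Vtx.mid ∉ segs j)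
    (hsol : IsSolution (RD m h) (FT m h occurs) (pathOf segs)) :
    ∀ j, ∀ v : Vtx m h, v ≠ Vtx.mid → RD m h v ≤ T m h + l h + 2 * h → v ∈ segs j := by
  intro j v hvmid hvRD
  by_contra hmem
  have htop : Vtx.top ∈ segs j := extreme_mem hm occurs hp segs hne hsol Vtx.top (Or.inl rfl) j
  have hbot : Vtx.bot ∈ segs j := extreme_mem hm occurs hp segs hne hsol Vtx.bot (Or.inr rfl) j
  have hlen : 1 ≤ (segs j).length := List.length_pos_iff.mpr (hne j)
  obtain ⟨q, hq2, hqN, hmq, hmq', hmem', hgetD⟩ := block_exists hp segs j 2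
  have hocc := exists_early_occ hp segs hsol v hvmid hqN
  obtain ⟨a, b, ha1, ha2, hb1, hb2, hkey, -⟩ :=
    key' hm occurs segs hsol v hvmid q _ (by omega) hlen hocc hmq hmq'
      (seg_avoid segs j q hmem' v hmem)
  have hdI : dur (FT m h occurs) (pathOf segs) (q + 1) (q + (segs j).length)
      ≤ l h + 2 * h := by omega
  obtain ⟨t1, ht1⟩ := List.mem_iff_get.mp htop
  obtain ⟨t2, ht2⟩ := List.mem_iff_get.mp hbot
  have hst : ∀ t : Fin (segs j).length,
      pathOf segs (q + 1 + (t : ℕ)) = (segs j).get t := by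
    intro t
    have hx := hgetD (1 + (t : ℕ)) (by have := t.isLt; omega)
    rw [show q + (1 + (t : ℕ)) = q + 1 + (t : ℕ) by omega,
      show (1 + (t : ℕ)) = (t : ℕ) + 1 by omega] at hx
    rw [hx, List.getD_cons_succ, List.getD_eq_getElem _ _ t.isLt]
    exact List.get_eq_getElem.symm
  have hstop : pathOf segs (q + 1 + (t1 : ℕ)) = Vtx.top := by rw [hst t1, ht1]
  have hsbot : pathOf segs (q + 1 + (t2 : ℕ)) = Vtx.bot := by rw [hst t2, ht2]
  have htne : (t1 : ℕ) ≠ (t2 : ℕ) := by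
    intro e
    rw [show q + 1 + (t1 : ℕ) = q + 1 + (t2 : ℕ) by omega] at hstop
    rw [hstop] at hsbot
    exact absurd hsbot (by simp)
  have hl2h := two_h_lt_l h
  rcases Nat.lt_or_ge (t1 : ℕ) (t2 : ℕ) with hlt | hge
  · have h2l := interior_lb hm occurs segs hsol (α := q + 1 + (t1 : ℕ)) (β := q + 1 + (t2 : ℕ))
      (lo := q + 1) (hi := q + (segs j).length)
      (by omega) (by omega) (by have := t2.isLt; omega) (Or.inl ⟨hstop, hsbot⟩)
    omega
  · have hgt : (t2 : ℕ) < (t1 : ℕ) := by omega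
    have h2l := interior_lb hm occurs segs hsol (α := q + 1 + (t2 : ℕ)) (β := q + 1 + (t1 : ℕ))
      (lo := q + 1) (hi := q + (segs j).length)
      (by omega) (by omega) (by have := t1.isLt; omega) (Or.inr ⟨hsbot, hstop⟩)
    omega

end CRUAV
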